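/- For every ρ ∈ (0,1) there exists a constant C > 0 (depending only on ρ) such that: for every A > 0, every function u : ℤ³ → ℂ with u(0) = 0 and |u(α)| ≤ A/|α|^{2+ρ} for all α ≠ 0, and every k ∈ ℤ³ with k ≠ 0, one has Σ_{α ∈ ℤ³, 0 < |α| ≤ 2|k|} |α|·|u(α)|·|u(k−α)| + |k|·Σ_{α ∈ ℤ³, |α| > 2|k|} |u(α)|·|u(k−α)| ≤ C·A²/|k|^{2ρ}. -/

import Mathlib

/-!
Write `σ = 2 + ρ`, so that `‖u a‖ ≤ A |a|^{-σ}` for every `a`. The near sum is then controlled by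
the lattice convolution `∑ |a|^{1-σ} |k - a|^{-σ}` over `|a| ≤ 2|k|`: one of `|a|`, `|k - a|` is at
least `|k|/2`, and freezing that factor leaves a sum of `|b|^{-s}` (`s < 3`) over a ball of radius
`O(|k|)`, which is `O(|k|^{3-s})`. In the far sum `|k - a| ≥ |a|/2`, which leaves the tail of
`|a|^{-2σ}` (`2σ ≥ 4`) outside the ball of radius `2|k|`, which is `O(|k|^{3-2σ})`. Both lattice
sums become one-dimensional after grouping the points into the sup-norm shells `{max |aᵢ| = m}`,
of at most `26 m²` points each.
-/

noncomputable def znorm (a : Fin 3 → ℤ) : ℝ := Real.sqrt (∑ i, ((a i : ℝ)) ^ 2)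

open Finset

noncomputable def latticeToEuclidean : (Fin 3 → ℤ) →+ EuclideanSpace ℝ (Fin 3) :=
  AddMonoidHom.mk' (fun a => WithLp.toLp 2 fun i => (a i : ℝ)) fun a b => by ext i; simp

lemma znorm_eq_norm_latticeToEuclidean (a : Fin 3 → ℤ) : znorm a = ‖latticeToEuclidean a‖ := by
  simp [znorm, latticeToEuclidean, EuclideanSpace.norm_eq]

lemma znorm_nonneg (a : Fin 3 → ℤ) : 0 ≤ znorm a := Real.sqrt_nonneg _

@[simp] lemma znorm_zero : znorm 0 = 0 := by simp [znorm]

lemma znorm_sub_le (a b : Fin 3 → ℤ) : znorm (a - b) ≤ znorm a + znorm b := by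
  simpa only [znorm_eq_norm_latticeToEuclidean, map_sub] using norm_sub_le _ _

lemma znorm_sub_znorm_le (a b : Fin 3 → ℤ) : znorm a - znorm b ≤ znorm (a - b) := by
  simpa only [znorm_eq_norm_latticeToEuclidean, map_sub] using norm_sub_norm_le _ _

lemma znorm_sub_comm (a b : Fin 3 → ℤ) : znorm (a - b) = znorm (b - a) := by
  simpa only [znorm_eq_norm_latticeToEuclidean, map_sub] using norm_sub_rev _ _

/-- `max |aᵢ|`, valued in `ℕ` so that lattice points can be grouped into shells. -/
def supNorm (a : Fin 3 → ℤ) : ℕ := univ.sup fun i => (a i).natAbs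

lemma supNorm_le_iff {a : Fin 3 → ℤ} {m : ℕ} : supNorm a ≤ m ↔ ∀ i, (a i).natAbs ≤ m := by
  simp [supNorm]

lemma supNorm_eq_zero {a : Fin 3 → ℤ} : supNorm a = 0 ↔ a = 0 := by
  rw [← Nat.le_zero, supNorm_le_iff, funext_iff]
  simp

lemma supNorm_le_znorm (a : Fin 3 → ℤ) : (supNorm a : ℝ) ≤ znorm a := by
  obtain ⟨i, -, hi⟩ := exists_mem_eq_sup univ univ_nonempty fun i => (a i).natAbs
  rw [supNorm, hi, Nat.cast_natAbs, Int.cast_abs]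
  exact Real.abs_le_sqrt (single_le_sum (f := fun j => ((a j : ℝ)) ^ 2)
    (fun j _ => sq_nonneg _) (mem_univ i))

lemma znorm_le_two_mul_supNorm (a : Fin 3 → ℤ) : znorm a ≤ 2 * supNorm a := by
  have hcoord (i : Fin 3) : ((a i : ℝ)) ^ 2 ≤ (supNorm a : ℝ) ^ 2 := by
    rw [← sq_abs, ← Int.cast_abs, ← Nat.cast_natAbs]
    gcongr
    exact supNorm_le_iff.1 le_rfl i
  rw [znorm, Real.sqrt_le_left (by positivity)]
  calc ∑ i, ((a i : ℝ)) ^ 2 ≤ ∑ _i : Fin 3, (supNorm a : ℝ) ^ 2 := sum_le_sum fun i _ => hcoord i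
    _ ≤ (2 * supNorm a) ^ 2 := by
      rw [sum_const, card_univ, Fintype.card_fin, nsmul_eq_mul, Nat.cast_ofNat]
      nlinarith [sq_nonneg (supNorm a : ℝ)]

lemma supNorm_pos {a : Fin 3 → ℤ} (ha : a ≠ 0) : 0 < supNorm a :=
  Nat.pos_of_ne_zero (supNorm_eq_zero.not.2 ha)

lemma znorm_pos {a : Fin 3 → ℤ} (ha : a ≠ 0) : 0 < znorm a :=
  (Nat.cast_pos.2 (supNorm_pos ha)).trans_le (supNorm_le_znorm a)

lemma znorm_rpow_neg_le_supNorm_rpow_neg {s : ℝ} (hs : 0 < s) (a : Fin 3 → ℤ) :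
    znorm a ^ (-s) ≤ (supNorm a : ℝ) ^ (-s) := by
  rcases eq_or_ne a 0 with rfl | ha
  · simp [supNorm_eq_zero.2 rfl]
  · exact Real.rpow_le_rpow_of_nonpos (Nat.cast_pos.2 (supNorm_pos ha)) (supNorm_le_znorm a)
      (by linarith)

noncomputable def cube (m : ℕ) : Finset (Fin 3 → ℤ) := Fintype.piFinset fun _ => Icc (-(m : ℤ)) m

lemma mem_cube {m : ℕ} {a : Fin 3 → ℤ} : a ∈ cube m ↔ supNorm a ≤ m := by
  simp only [cube, Fintype.mem_piFinset, mem_Icc, supNorm_le_iff]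
  exact forall_congr' fun i => by omega

lemma card_cube (m : ℕ) : #(cube m) = (2 * m + 1) ^ 3 := by
  rw [cube, Fintype.card_piFinset, prod_const, card_univ, Fintype.card_fin, Int.card_Icc]
  congr 1
  omega

lemma card_filter_supNorm_eq_le (F : Finset (Fin 3 → ℤ)) (m : ℕ) :
    #{a ∈ F | a ≠ 0 ∧ supNorm a = m} ≤ 26 * m ^ 2 := by
  rcases m with _ | n
  · simp [supNorm_eq_zero]
  have hshell : {a ∈ F | a ≠ 0 ∧ supNorm a = n + 1} ⊆ cube (n + 1) \ cube n := by
    intro a ha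
    simp only [mem_filter] at ha
    simp only [mem_sdiff, mem_cube]
    omega
  have hcube : cube n ⊆ cube (n + 1) := fun a ha => mem_cube.2 (by have := mem_cube.1 ha; omega)
  calc _ ≤ #(cube (n + 1) \ cube n) := card_le_card hshell
    _ = (2 * (n + 1) + 1) ^ 3 - (2 * n + 1) ^ 3 := by
      rw [card_sdiff_of_subset hcube, card_cube, card_cube]
    _ ≤ 26 * (n + 1) ^ 2 := by
      rw [show (2 * (n + 1) + 1) ^ 3 = (2 * n + 1) ^ 3 + (24 * n ^ 2 + 48 * n + 26) by ring,
        Nat.add_sub_cancel_left]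
      nlinarith

lemma sum_weight_supNorm_le (F : Finset (Fin 3 → ℤ)) {w : ℕ → ℝ} (hw : ∀ m, 0 ≤ w m)
    (hw0 : w 0 = 0) {G : Finset ℕ} (hG : ∀ a ∈ F, a ≠ 0 → supNorm a ∈ G) :
    ∑ a ∈ F, w (supNorm a) ≤ ∑ m ∈ G, 26 * (m : ℝ) ^ 2 * w m := by
  classical
  rw [← sum_filter_of_ne (p := fun a => a ≠ 0)
      fun a _ h ha => h (by simp [ha, supNorm_eq_zero.2, hw0]),
    ← sum_fiberwise_of_maps_to (t := G) (g := supNorm) fun a ha =>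
      hG a (mem_filter.1 ha).1 (mem_filter.1 ha).2]
  refine sum_le_sum fun m _ => ?_
  rw [sum_congr rfl fun a ha => by rw [(mem_filter.1 ha).2], sum_const, nsmul_eq_mul, filter_filter]
  gcongr
  · exact hw m
  · exact_mod_cast card_filter_supNorm_eq_le F m

lemma mul_rpow_sub_one_le_rpow_sub_rpow {t x : ℝ} (ht0 : 0 ≤ t) (ht1 : t ≤ 1) (hx : 1 ≤ x) :
    t * x ^ (t - 1) ≤ x ^ t - (x - 1) ^ t := by
  have hx0 : 0 < x := one_pos.trans_le hx
  have hbernoulli : (1 + -x⁻¹) ^ t ≤ 1 + t * -x⁻¹ :=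
    rpow_one_add_le_one_add_mul_self (by linarith [inv_le_one_of_one_le₀ hx]) ht0 ht1
  have hfactor : (x - 1) ^ t = x ^ t * (1 + -x⁻¹) ^ t := by
    rw [← Real.mul_rpow hx0.le (by linarith [inv_le_one_of_one_le₀ hx])]
    field_simp
    ring_nf
  have hderiv : t * x ^ (t - 1) = x ^ t * (t * x⁻¹) := by
    rw [Real.rpow_sub_one hx0.ne']
    ring
  rw [hfactor, hderiv]
  nlinarith [Real.rpow_pos_of_pos hx0 t]

lemma sum_Icc_rpow_le_of_nonpos {p : ℝ} (hp1 : -1 < p) (hp0 : p ≤ 0) (M : ℕ) :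
    ∑ m ∈ Icc 1 M, (m : ℝ) ^ p ≤ (M : ℝ) ^ (p + 1) / (p + 1) := by
  have hp : 0 < p + 1 := by linarith
  induction M with
  | zero => simp [Real.zero_rpow hp.ne']
  | succ N ih =>
    have hstep := mul_rpow_sub_one_le_rpow_sub_rpow hp.le (by linarith) (x := (N : ℝ) + 1)
      (by linarith [N.cast_nonneg (α := ℝ)])
    rw [add_sub_cancel_right, add_sub_cancel_right] at hstep
    rw [sum_Icc_succ_top (by omega), Nat.cast_succ, le_div_iff₀ hp]
    rw [le_div_iff₀ hp] at ih
    nlinarith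

lemma sum_Icc_rpow_le {p : ℝ} (hp : -1 < p) (M : ℕ) :
    ∑ m ∈ Icc 1 M, (m : ℝ) ^ p ≤ (1 + (p + 1)⁻¹) * (M : ℝ) ^ (p + 1) := by
  have hp1 : 0 < p + 1 := by linarith
  rcases lt_or_ge p 0 with hp0 | hp0
  · refine (sum_Icc_rpow_le_of_nonpos hp hp0.le M).trans ?_
    rw [div_eq_inv_mul]
    gcongr
    linarith
  calc ∑ m ∈ Icc 1 M, (m : ℝ) ^ p ≤ ∑ _m ∈ Icc 1 M, (M : ℝ) ^ p :=
        sum_le_sum fun m hm => by gcongr; exact (mem_Icc.1 hm).2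
    _ = (M : ℝ) ^ (p + 1) := by
        rw [sum_const, Nat.card_Icc, nsmul_eq_mul, Real.rpow_add_one' (by positivity) hp1.ne']
        simp [mul_comm]
    _ ≤ (1 + (p + 1)⁻¹) * (M : ℝ) ^ (p + 1) := by
        refine le_mul_of_one_le_left (by positivity) ?_
        linarith [inv_pos.2 hp1]

lemma sum_znorm_rpow_neg_le {s R : ℝ} (hs0 : 0 < s) (hs3 : s < 3) (hR : 0 ≤ R)
    {F : Finset (Fin 3 → ℤ)} (hF : ∀ a ∈ F, znorm a ≤ R) :
    ∑ a ∈ F, znorm a ^ (-s) ≤ 26 * (1 + (3 - s)⁻¹) * R ^ (3 - s) := by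
  have hshell : ∀ a ∈ F, a ≠ 0 → supNorm a ∈ Icc 1 ⌊R⌋₊ := fun a ha ha0 =>
    mem_Icc.2 ⟨supNorm_pos ha0,
      Nat.le_floor ((supNorm_le_znorm a).trans (hF a ha))⟩
  calc ∑ a ∈ F, znorm a ^ (-s) ≤ ∑ a ∈ F, (supNorm a : ℝ) ^ (-s) :=
        sum_le_sum fun a _ => znorm_rpow_neg_le_supNorm_rpow_neg hs0 a
    _ ≤ ∑ m ∈ Icc 1 ⌊R⌋₊, 26 * (m : ℝ) ^ 2 * (m : ℝ) ^ (-s) :=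
        sum_weight_supNorm_le F (w := fun m => (m : ℝ) ^ (-s)) (fun m => by positivity)
          (by rw [Nat.cast_zero, Real.zero_rpow (by linarith)]) hshell
    _ = 26 * ∑ m ∈ Icc 1 ⌊R⌋₊, (m : ℝ) ^ (2 - s) := by
        rw [mul_sum]
        refine sum_congr rfl fun m hm => ?_
        have hm : (0 : ℝ) < m := by exact_mod_cast (mem_Icc.1 hm).1
        rw [sub_eq_add_neg, Real.rpow_add hm, Real.rpow_two, mul_assoc]
    _ ≤ 26 * ((1 + (3 - s)⁻¹) * (⌊R⌋₊ : ℝ) ^ (3 - s)) := by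
        have := sum_Icc_rpow_le (p := 2 - s) (by linarith) ⌊R⌋₊
        rw [show 2 - s + 1 = 3 - s by ring] at this
        gcongr
    _ ≤ 26 * (1 + (3 - s)⁻¹) * R ^ (3 - s) := by
        rw [← mul_assoc]
        gcongr
        exact Nat.floor_le hR

lemma sum_znorm_rpow_neg_four_le {R : ℝ} (hR : 0 < R) {F : Finset (Fin 3 → ℤ)}
    (hF : ∀ a ∈ F, R < znorm a) :
    ∑ a ∈ F, znorm a ^ (-4 : ℝ) ≤ 104 / R := by
  have hshell : ∀ a ∈ F, a ≠ 0 → supNorm a ∈ Ioo ⌊R / 2⌋₊ (F.sup supNorm + 1) := by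
    intro a ha _
    refine mem_Ioo.2 ⟨Nat.floor_lt (by positivity) |>.2 ?_, Nat.lt_succ_of_le (le_sup ha)⟩
    linarith [hF a ha, znorm_le_two_mul_supNorm a]
  calc ∑ a ∈ F, znorm a ^ (-4 : ℝ) ≤ ∑ a ∈ F, (supNorm a : ℝ) ^ (-4 : ℝ) :=
        sum_le_sum fun a _ => znorm_rpow_neg_le_supNorm_rpow_neg (by norm_num) a
    _ ≤ ∑ m ∈ Ioo ⌊R / 2⌋₊ (F.sup supNorm + 1), 26 * (m : ℝ) ^ 2 * (m : ℝ) ^ (-4 : ℝ) :=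
        sum_weight_supNorm_le F (w := fun m => (m : ℝ) ^ (-4 : ℝ)) (fun m => by positivity)
          (by rw [Nat.cast_zero, Real.zero_rpow (by norm_num)]) hshell
    _ = 26 * ∑ m ∈ Ioo ⌊R / 2⌋₊ (F.sup supNorm + 1), ((m : ℝ) ^ 2)⁻¹ := by
        rw [mul_sum]
        refine sum_congr rfl fun m _ => ?_
        rw [show (-4 : ℝ) = -(4 : ℕ) by norm_num, Real.rpow_neg_natCast, zpow_neg, zpow_natCast]
        rcases eq_or_ne (m : ℝ) 0 with hm | hm
        · simp [hm]
        · field_simp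
    _ ≤ 26 * (2 / (⌊R / 2⌋₊ + 1)) := by gcongr; exact sum_Ioo_inv_sq_le _ _
    _ ≤ 26 * (2 / (R / 2)) := by gcongr; exact (Nat.lt_floor_add_one _).le
    _ = 104 / R := by field_simp; norm_num

lemma sum_znorm_rpow_neg_le_of_lt {s R : ℝ} (hs : 4 ≤ s) (hR : 0 < R)
    {F : Finset (Fin 3 → ℤ)} (hF : ∀ a ∈ F, R < znorm a) :
    ∑ a ∈ F, znorm a ^ (-s) ≤ 104 * R ^ (3 - s) := by
  have hterm : ∀ a ∈ F, znorm a ^ (-s) ≤ R ^ (4 - s) * znorm a ^ (-4 : ℝ) := by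
    intro a ha
    have ha0 : 0 < znorm a := hR.trans (hF a ha)
    rw [show -s = (4 - s) + (-4) by ring, Real.rpow_add ha0]
    exact mul_le_mul_of_nonneg_right (Real.rpow_le_rpow_of_nonpos hR (hF a ha).le (by linarith))
      (by positivity)
  calc ∑ a ∈ F, znorm a ^ (-s) ≤ R ^ (4 - s) * ∑ a ∈ F, znorm a ^ (-4 : ℝ) := by
        rw [mul_sum]; exact sum_le_sum hterm
    _ ≤ R ^ (4 - s) * (104 / R) := by gcongr; exact sum_znorm_rpow_neg_four_le hR hF
    _ = 104 * R ^ (3 - s) := by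
        rw [show 3 - s = (4 - s) - 1 by ring, Real.rpow_sub_one hR.ne']
        ring

section Convolution

variable {σ : ℝ} {k : Fin 3 → ℤ} {F : Finset (Fin 3 → ℤ)}

lemma sum_rpow_mul_rpow_le_of_two_mul_znorm_le (hσ1 : 1 < σ) (hσ4 : σ < 4) (hk : k ≠ 0)
    (hF : ∀ a ∈ F, 2 * znorm a ≤ znorm k) :
    ∑ a ∈ F, znorm a ^ (1 - σ) * znorm (k - a) ^ (-σ)
      ≤ 26 * (1 + (4 - σ)⁻¹) * (znorm k / 2) ^ (4 - 2 * σ) := by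
  have hK : 0 < znorm k / 2 := by linarith [znorm_pos hk]
  calc ∑ a ∈ F, znorm a ^ (1 - σ) * znorm (k - a) ^ (-σ)
      ≤ ∑ a ∈ F, (znorm k / 2) ^ (-σ) * znorm a ^ (-(σ - 1)) := by
        refine sum_le_sum fun a ha => ?_
        have hka : znorm k / 2 ≤ znorm (k - a) := by linarith [znorm_sub_znorm_le k a, hF a ha]
        rw [mul_comm, show 1 - σ = -(σ - 1) by ring]
        exact mul_le_mul_of_nonneg_right (Real.rpow_le_rpow_of_nonpos hK hka (by linarith))
          (Real.rpow_nonneg (znorm_nonneg _) _)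
    _ ≤ (znorm k / 2) ^ (-σ) * (26 * (1 + (3 - (σ - 1))⁻¹) * (znorm k / 2) ^ (3 - (σ - 1))) := by
        rw [← mul_sum]
        gcongr
        exact sum_znorm_rpow_neg_le (by linarith) (by linarith) hK.le
          fun a ha => by linarith [hF a ha]
    _ = 26 * (1 + (4 - σ)⁻¹) * (znorm k / 2) ^ (4 - 2 * σ) := by
        rw [mul_left_comm, ← Real.rpow_add hK]
        ring_nf

lemma sum_rpow_mul_rpow_le_of_lt_two_mul_znorm (hσ1 : 1 < σ) (hσ3 : σ < 3) (hk : k ≠ 0)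
    (hF : ∀ a ∈ F, znorm k < 2 * znorm a ∧ znorm a ≤ 2 * znorm k) :
    ∑ a ∈ F, znorm a ^ (1 - σ) * znorm (k - a) ^ (-σ)
      ≤ 26 * (1 + (3 - σ)⁻¹) * (znorm k / 2) ^ (1 - σ) * (3 * znorm k) ^ (3 - σ) := by
  have hK : 0 < znorm k := znorm_pos hk
  calc ∑ a ∈ F, znorm a ^ (1 - σ) * znorm (k - a) ^ (-σ)
      ≤ ∑ a ∈ F, (znorm k / 2) ^ (1 - σ) * znorm (k - a) ^ (-σ) := by
        refine sum_le_sum fun a ha => ?_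
        exact mul_le_mul_of_nonneg_right
          (Real.rpow_le_rpow_of_nonpos (by positivity) (by linarith [hF a ha]) (by linarith))
          (Real.rpow_nonneg (znorm_nonneg _) _)
    _ = (znorm k / 2) ^ (1 - σ) * ∑ b ∈ F.image (k - ·), znorm b ^ (-σ) := by
        rw [mul_sum, sum_image fun _ _ _ _ h => sub_right_injective h]
    _ ≤ (znorm k / 2) ^ (1 - σ) * (26 * (1 + (3 - σ)⁻¹) * (3 * znorm k) ^ (3 - σ)) := by
        gcongr
        refine sum_znorm_rpow_neg_le (by linarith) hσ3 (by positivity) fun b hb => ?_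
        obtain ⟨a, ha, rfl⟩ := mem_image.1 hb
        linarith [znorm_sub_le k a, hF a ha]
    _ = _ := by ring

end Convolution

lemma exists_sum_rpow_mul_rpow_le_of_znorm_le {σ : ℝ} (hσ1 : 1 < σ) (hσ3 : σ < 3) :
    ∃ C > 0, ∀ k : Fin 3 → ℤ, k ≠ 0 → ∀ F : Finset (Fin 3 → ℤ),
      (∀ a ∈ F, znorm a ≤ 2 * znorm k) →
        ∑ a ∈ F, znorm a ^ (1 - σ) * znorm (k - a) ^ (-σ) ≤ C * znorm k ^ (4 - 2 * σ) := by
  have h₁ : 0 < 4 - σ := by linarith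
  have h₂ : 0 < 3 - σ := by linarith
  refine ⟨26 * (1 + (4 - σ)⁻¹) / 2 ^ (4 - 2 * σ) + 26 * (1 + (3 - σ)⁻¹) * 3 ^ (3 - σ) / 2 ^ (1 - σ),
    by positivity, fun k hk F hF => ?_⟩
  have hK : 0 < znorm k := znorm_pos hk
  rw [← sum_filter_add_sum_filter_not F fun a => 2 * znorm a ≤ znorm k]
  refine (add_le_add
    (sum_rpow_mul_rpow_le_of_two_mul_znorm_le hσ1 (by linarith) hk fun a ha => (mem_filter.1 ha).2)
    (sum_rpow_mul_rpow_le_of_lt_two_mul_znorm hσ1 hσ3 hk fun a ha =>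
      ⟨not_le.1 (mem_filter.1 ha).2, hF a (mem_filter.1 ha).1⟩)).trans_eq ?_
  have hexp : znorm k ^ (1 - σ) * znorm k ^ (3 - σ) = znorm k ^ (4 - 2 * σ) := by
    rw [← Real.rpow_add hK]; ring_nf
  rw [Real.div_rpow hK.le zero_le_two, Real.div_rpow hK.le zero_le_two,
    Real.mul_rpow zero_le_three hK.le, ← hexp]
  ring

lemma exists_sum_rpow_mul_rpow_le_of_lt_znorm {σ : ℝ} (hσ : 2 ≤ σ) :
    ∃ C > 0, ∀ k : Fin 3 → ℤ, k ≠ 0 → ∀ F : Finset (Fin 3 → ℤ),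
      (∀ a ∈ F, 2 * znorm k < znorm a) →
        ∑ a ∈ F, znorm a ^ (-σ) * znorm (k - a) ^ (-σ) ≤ C * znorm k ^ (3 - 2 * σ) := by
  refine ⟨2 ^ σ * 104 * 2 ^ (3 - 2 * σ), by positivity, fun k hk F hF => ?_⟩
  have hK : 0 < znorm k := znorm_pos hk
  have hterm : ∀ a ∈ F, znorm a ^ (-σ) * znorm (k - a) ^ (-σ) ≤ 2 ^ σ * znorm a ^ (-(2 * σ)) := by
    intro a ha
    have ha0 : 0 < znorm a := by linarith [hF a ha]
    have hka : znorm a / 2 ≤ znorm (k - a) := by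
      linarith [znorm_sub_znorm_le a k, znorm_sub_comm a k, hF a ha]
    calc znorm a ^ (-σ) * znorm (k - a) ^ (-σ) ≤ znorm a ^ (-σ) * (znorm a / 2) ^ (-σ) :=
          mul_le_mul_of_nonneg_left
            (Real.rpow_le_rpow_of_nonpos (by positivity) hka (by linarith)) (by positivity)
      _ = 2 ^ σ * znorm a ^ (-(2 * σ)) := by
          rw [Real.div_rpow ha0.le zero_le_two, Real.rpow_neg zero_le_two, div_inv_eq_mul,
            ← mul_assoc, ← Real.rpow_add ha0]
          ring_nf
  calc ∑ a ∈ F, znorm a ^ (-σ) * znorm (k - a) ^ (-σ) ≤ 2 ^ σ * ∑ a ∈ F, znorm a ^ (-(2 * σ)) := by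
        rw [mul_sum]; exact sum_le_sum hterm
    _ ≤ 2 ^ σ * (104 * (2 * znorm k) ^ (3 - 2 * σ)) := by
        gcongr
        exact sum_znorm_rpow_neg_le_of_lt (by linarith) (by positivity) hF
    _ = 2 ^ σ * 104 * 2 ^ (3 - 2 * σ) * znorm k ^ (3 - 2 * σ) := by
        rw [Real.mul_rpow zero_le_two hK.le]
        ring

lemma summable_subtype_and_tsum_le_of_sum_le {ι : Type*} {P : ι → Prop} {f : ι → ℝ} {B : ℝ}
    (hf : ∀ i, P i → 0 ≤ f i) (h : ∀ F : Finset ι, (∀ i ∈ F, P i) → ∑ i ∈ F, f i ≤ B) :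
    Summable (fun x : Subtype P => f x) ∧ ∑' x : Subtype P, f x ≤ B := by
  have hsub (F : Finset (Subtype P)) : ∑ x ∈ F, f x ≤ B := by
    have hmem : ∀ i ∈ F.map (Function.Embedding.subtype P), P i := by
      simp only [mem_map, Function.Embedding.coe_subtype]
      rintro _ ⟨x, -, rfl⟩
      exact x.2
    simpa only [sum_map, Function.Embedding.coe_subtype] using h _ hmem
  have hsummable := summable_of_sum_le (fun x : Subtype P => hf x x.2) hsub
  exact ⟨hsummable, hsummable.tsum_le_of_sum_le hsub⟩

section Decay

variable {E : Type*} [SeminormedAddGroup E] {u : (Fin 3 → ℤ) → E} {A σ B : ℝ} {k : Fin 3 → ℤ}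

/-- At `a = 0` the bound holds because `u 0 = 0` and `0 ^ (-σ) = 0`. -/
lemma norm_le_mul_znorm_rpow_neg (hσ : σ ≠ 0) (hu0 : u 0 = 0)
    (hu : ∀ a, a ≠ 0 → ‖u a‖ ≤ A / znorm a ^ σ) (a : Fin 3 → ℤ) : ‖u a‖ ≤ A * znorm a ^ (-σ) := by
  rcases eq_or_ne a 0 with rfl | ha
  · simp [hu0, Real.zero_rpow (neg_ne_zero.2 hσ)]
  · rw [Real.rpow_neg (znorm_nonneg a), ← div_eq_mul_inv]
    exact hu a ha

lemma norm_mul_norm_le_of_decay (hdecay : ∀ a, ‖u a‖ ≤ A * znorm a ^ (-σ)) (a b : Fin 3 → ℤ) :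
    ‖u a‖ * ‖u b‖ ≤ A ^ 2 * (znorm a ^ (-σ) * znorm b ^ (-σ)) := by
  nlinarith [hdecay a, hdecay b, norm_nonneg (u a), norm_nonneg (u b)]

lemma tsum_znorm_mul_norm_mul_norm_le (hdecay : ∀ a, ‖u a‖ ≤ A * znorm a ^ (-σ))
    (hconv : ∀ F : Finset (Fin 3 → ℤ), (∀ a ∈ F, znorm a ≤ 2 * znorm k) →
      ∑ a ∈ F, znorm a ^ (1 - σ) * znorm (k - a) ^ (-σ) ≤ B) :
    ∑' a : {a : Fin 3 → ℤ // 0 < znorm a ∧ znorm a ≤ 2 * znorm k},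
      znorm a.1 * ‖u a.1‖ * ‖u (k - a.1)‖ ≤ A ^ 2 * B := by
  refine (summable_subtype_and_tsum_le_of_sum_le (P := fun a => 0 < znorm a ∧ znorm a ≤ 2 * znorm k)
    (f := fun a => znorm a * ‖u a‖ * ‖u (k - a)‖)
    (fun a _ => mul_nonneg (mul_nonneg (znorm_nonneg a) (norm_nonneg _)) (norm_nonneg _))
    fun F hF => ?_).2
  calc ∑ a ∈ F, znorm a * ‖u a‖ * ‖u (k - a)‖
      ≤ ∑ a ∈ F, A ^ 2 * (znorm a ^ (1 - σ) * znorm (k - a) ^ (-σ)) := by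
        refine sum_le_sum fun a ha => ?_
        have := mul_le_mul_of_nonneg_left (norm_mul_norm_le_of_decay hdecay a (k - a))
          (znorm_nonneg a)
        rw [show 1 - σ = 1 + -σ by ring, Real.rpow_add (hF a ha).1, Real.rpow_one]
        linarith
    _ ≤ A ^ 2 * B := by
        rw [← mul_sum]
        exact mul_le_mul_of_nonneg_left (hconv F fun a ha => (hF a ha).2) (sq_nonneg A)

lemma summable_and_tsum_norm_mul_norm_le (hdecay : ∀ a, ‖u a‖ ≤ A * znorm a ^ (-σ))
    (hconv : ∀ F : Finset (Fin 3 → ℤ), (∀ a ∈ F, 2 * znorm k < znorm a) →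
      ∑ a ∈ F, znorm a ^ (-σ) * znorm (k - a) ^ (-σ) ≤ B) :
    Summable (fun a : {a : Fin 3 → ℤ // 2 * znorm k < znorm a} => ‖u a.1‖ * ‖u (k - a.1)‖) ∧
      ∑' a : {a : Fin 3 → ℤ // 2 * znorm k < znorm a}, ‖u a.1‖ * ‖u (k - a.1)‖ ≤ A ^ 2 * B :=
  summable_subtype_and_tsum_le_of_sum_le (P := fun a => 2 * znorm k < znorm a)
    (f := fun a => ‖u a‖ * ‖u (k - a)‖) (fun a _ => mul_nonneg (norm_nonneg _) (norm_nonneg _))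
    fun F hF =>
    calc ∑ a ∈ F, ‖u a‖ * ‖u (k - a)‖
        ≤ ∑ a ∈ F, A ^ 2 * (znorm a ^ (-σ) * znorm (k - a) ^ (-σ)) :=
          sum_le_sum fun a _ => norm_mul_norm_le_of_decay hdecay a (k - a)
      _ ≤ A ^ 2 * B := by
          rw [← mul_sum]
          exact mul_le_mul_of_nonneg_left (hconv F hF) (sq_nonneg A)

end Decay

/-- For every `ρ ∈ (0,1)` there is `C > 0` (depending only on `ρ`) such that for every
`A > 0`, every `u : ℤ³ → ℂ` with `u 0 = 0` and `|u α| ≤ A/|α|^{2+ρ}` for `α ≠ 0`, and every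
`k ≠ 0`, the nonlinear term satisfies
`∑_{0 < |α| ≤ 2|k|} |α||u α||u (k−α)| + |k|·∑_{|α| > 2|k|} |u α||u (k−α)| ≤ C·A²/|k|^{2ρ}`
(the second sum converging). -/
theorem bootstrap_decay_improvement
    (ρ : ℝ) (hρ0 : 0 < ρ) (hρ1 : ρ < 1) :
    ∃ C : ℝ, 0 < C ∧
      ∀ (A : ℝ), 0 < A →
        ∀ u : (Fin 3 → ℤ) → ℂ, u 0 = 0 →
          (∀ α : Fin 3 → ℤ, α ≠ 0 → ‖u α‖ ≤ A / znorm α ^ ((2 : ℝ) + ρ)) →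
          ∀ k : Fin 3 → ℤ, k ≠ 0 →
            Summable (fun α : {a : Fin 3 → ℤ // 2 * znorm k < znorm a} =>
              ‖u α.1‖ * ‖u (k - α.1)‖) ∧
            (∑' α : {a : Fin 3 → ℤ // 0 < znorm a ∧ znorm a ≤ 2 * znorm k},
                znorm α.1 * ‖u α.1‖ * ‖u (k - α.1)‖)
              + znorm k * (∑' α : {a : Fin 3 → ℤ // 2 * znorm k < znorm a},
                ‖u α.1‖ * ‖u (k - α.1)‖)
              ≤ C * A ^ 2 / znorm k ^ (2 * ρ) := by
  obtain ⟨C₁, hC₁, hnear⟩ :=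
    exists_sum_rpow_mul_rpow_le_of_znorm_le (σ := 2 + ρ) (by linarith) (by linarith)
  obtain ⟨C₂, hC₂, hfar⟩ := exists_sum_rpow_mul_rpow_le_of_lt_znorm (σ := 2 + ρ) (by linarith)
  refine ⟨C₁ + C₂, by positivity, fun A hA u hu0 hu k hk => ?_⟩
  have hK : 0 < znorm k := znorm_pos hk
  have hdecay := norm_le_mul_znorm_rpow_neg (by positivity) hu0 hu
  obtain ⟨hsummable, hfar_le⟩ := summable_and_tsum_norm_mul_norm_le hdecay (hfar k hk)
  refine ⟨hsummable, (add_le_add (tsum_znorm_mul_norm_mul_norm_le hdecay (hnear k hk))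
    (mul_le_mul_of_nonneg_left hfar_le hK.le)).trans_eq ?_⟩
  have hnear_exp : znorm k ^ (4 - 2 * (2 + ρ)) = (znorm k ^ (2 * ρ))⁻¹ := by
    rw [← Real.rpow_neg hK.le]
    ring_nf
  have hfar_exp : znorm k * znorm k ^ (3 - 2 * (2 + ρ)) = (znorm k ^ (2 * ρ))⁻¹ := by
    rw [← hnear_exp, show 4 - 2 * (2 + ρ) = 3 - 2 * (2 + ρ) + 1 by ring, Real.rpow_add_one hK.ne']
    ring
  rw [mul_left_comm (znorm k), mul_left_comm (znorm k), hfar_exp, hnear_exp]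
  ring
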